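/- Suppose there exists c > 0 such that for all nonzero x ∈ ℤ₊ⁿ, μ − λ·x_min/‖x‖₁ − a(1−b(x))·λ·(Σᵢ pᵢxᵢ − x_min)/‖x‖₁ ≥ c. Then with W(x) = ½Σᵢxᵢ² and LW the generator drift, LW(x) ≤ −c·‖x‖₁ + ½(λ + n·μ) for all x ∈ ℤ₊ⁿ (including x = 0). -/

import Mathlib

/-!
Since `W(y ± eᵢ) - W(y) = ±yᵢ + 1/2`, every arrival raises `W` by the length of the queue it
joins plus `1/2`, and every service lowers it by the length of the served queue less `1/2`.
Hence `LW(y) ≤ λ·(mean joined length) - μ‖y‖₁ + (λ + nμ)/2`, and the drift hypothesis,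
multiplied by `‖y‖₁`, says precisely that the first two terms are at most `-c‖y‖₁`.
-/

open Finset

noncomputable def halfSqNorm {ι : Type*} [Fintype ι] (y : ι → ℕ) : ℝ :=
  (1 / 2) * ∑ i, (y i : ℝ) ^ 2

theorem sum_sq_add_ite {ι : Type*} [Fintype ι] [DecidableEq ι] (f : ι → ℝ) (i : ι)
    (d : ℝ) :
    ∑ j, (f j + if j = i then d else 0) ^ 2 = ∑ j, f j ^ 2 + (2 * f i * d + d ^ 2) := by
  have expand : ∀ j, (f j + if j = i then d else 0) ^ 2
      = f j ^ 2 + if j = i then 2 * f i * d + d ^ 2 else 0 := by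
    intro j
    split_ifs with h
    · subst h; ring
    · ring
  simp only [expand, sum_add_distrib, sum_ite_eq', mem_univ, if_true]

theorem sum_natCast_pos_of_ne_zero {ι : Type*} [Fintype ι] {y : ι → ℕ} (hy : y ≠ 0) :
    0 < ∑ i, (y i : ℝ) := by
  have : ∑ i, y i ≠ 0 := fun h => hy (funext (sum_eq_zero_iff.mp h · (mem_univ _)))
  exact_mod_cast Nat.pos_of_ne_zero this

namespace halfSqNorm

variable {ι : Type*} [Fintype ι] [DecidableEq ι]

theorem add_single_sub (y : ι → ℕ) (i : ι) :
    halfSqNorm (fun j => y j + if j = i then 1 else 0) - halfSqNorm y = y i + 1 / 2 := by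
  have hcast : ∀ j, ((y j + if j = i then 1 else 0 : ℕ) : ℝ)
      = y j + if j = i then 1 else 0 := by
    intro j; push_cast; rfl
  simp only [halfSqNorm, hcast, sum_sq_add_ite]
  ring

theorem sub_single_sub (y : ι → ℕ) (i : ι) (hi : 0 < y i) :
    halfSqNorm (fun j => y j - if j = i then 1 else 0) - halfSqNorm y = -y i + 1 / 2 := by
  have hcast : ∀ j, ((y j - if j = i then 1 else 0 : ℕ) : ℝ)
      = y j + if j = i then -1 else 0 := by
    intro j
    split_ifs with h
    · subst h; rw [Nat.cast_sub hi]; push_cast; ring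
    · simp
  simp only [halfSqNorm, hcast, sum_sq_add_ite]
  ring

theorem sum_mul_add_single_sub (y : ι → ℕ) {p : ι → ℝ} (hp : ∑ i, p i = 1) :
    ∑ i, p i * (halfSqNorm (fun j => y j + if j = i then 1 else 0) - halfSqNorm y)
      = ∑ i, p i * y i + 1 / 2 := by
  simp only [add_single_sub, mul_add, sum_add_distrib, ← sum_mul, hp, one_mul]

theorem sum_service_sub_le (y : ι → ℕ) :
    ∑ i, (if 0 < y i then (1 : ℝ) else 0) *
        (halfSqNorm (fun j => y j - if j = i then 1 else 0) - halfSqNorm y)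
      ≤ -∑ i, (y i : ℝ) + Fintype.card ι / 2 :=
  calc _ ≤ ∑ i, (-(y i : ℝ) + 1 / 2) := sum_le_sum fun i _ => by
          rcases (y i).eq_zero_or_pos with h | h
          · simp [h]
          · rw [if_pos h, one_mul, sub_single_sub y i h]
    _ = _ := by
          simp only [sum_add_distrib, sum_neg_distrib, sum_const, card_univ, nsmul_eq_mul]
          ring

end halfSqNorm

theorem stmt7_general (n : ℕ) (lam mu a : ℝ) (hmu : 0 < mu)
    (p : Fin n → ℝ) (hps : ∑ i, p i = 1)
    (b : (Fin n → ℕ) → ℝ)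
    (midx : (Fin n → ℕ) → Fin n)
    (W : (Fin n → ℕ) → ℝ) (hW : ∀ y, W y = (1 / 2) * ∑ i, (y i : ℝ) ^ 2)
    (LW : (Fin n → ℕ) → ℝ)
    (hLW : ∀ y, LW y = a * (1 - b y) * lam *
        (∑ i, p i * (W (fun j => y j + if j = i then 1 else 0) - W y))
      + (1 - a * (1 - b y)) * lam * (W (fun j => y j + if j = midx y then 1 else 0) - W y)
      + mu * ∑ i, (if 0 < y i then (1 : ℝ) else 0) *
          (W (fun j => y j - if j = i then 1 else 0) - W y))
    (c : ℝ)
    (hdrift : ∀ y : Fin n → ℕ, y ≠ 0 →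
      c ≤ mu - lam * (y (midx y) : ℝ) / (∑ i, (y i : ℝ))
        - a * (1 - b y) * lam * ((∑ i, p i * (y i : ℝ)) - (y (midx y) : ℝ)) / (∑ i, (y i : ℝ))) :
    ∀ y : Fin n → ℕ, LW y ≤ -c * (∑ i, (y i : ℝ)) + (lam + n * mu) / 2 := by
  obtain rfl : W = halfSqNorm := funext hW
  intro y
  set S : ℝ := ∑ i, (y i : ℝ)
  set q : ℝ := a * (1 - b y) * lam
  have hservice := mul_le_mul_of_nonneg_left (halfSqNorm.sum_service_sub_le y) hmu.le
  rw [Fintype.card_fin] at hservice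
  have hdrift_mul : q * ∑ i, p i * y i + (lam - q) * y (midx y) - mu * S ≤ -c * S := by
    rcases eq_or_ne y 0 with rfl | hy
    · simp [S]
    have hS : 0 < S := sum_natCast_pos_of_ne_zero hy
    have h := mul_le_mul_of_nonneg_right (hdrift y hy) hS.le
    rw [sub_mul, sub_mul, div_mul_cancel₀ _ hS.ne', div_mul_cancel₀ _ hS.ne'] at h
    linarith
  rw [hLW, halfSqNorm.sum_mul_add_single_sub y hps, halfSqNorm.add_single_sub]
  linarith

theorem stmt7 (n : ℕ) (hn : 1 ≤ n) (lam mu a : ℝ) (hlam : 0 < lam) (hmu : 0 < mu)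
    (ha0 : 0 ≤ a) (ha1 : a ≤ 1)
    (p : Fin n → ℝ) (hp : ∀ i, 0 ≤ p i) (hps : ∑ i, p i = 1)
    (b : (Fin n → ℕ) → ℝ) (hb : ∀ y, 0 ≤ b y ∧ b y ≤ 1)
    (midx : (Fin n → ℕ) → Fin n) (hmidx : ∀ (y : Fin n → ℕ) (i : Fin n), y (midx y) ≤ y i)
    (W : (Fin n → ℕ) → ℝ) (hW : ∀ y, W y = (1 / 2) * ∑ i, (y i : ℝ) ^ 2)
    (LW : (Fin n → ℕ) → ℝ)
    (hLW : ∀ y, LW y = a * (1 - b y) * lam *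
        (∑ i, p i * (W (fun j => y j + if j = i then 1 else 0) - W y))
      + (1 - a * (1 - b y)) * lam * (W (fun j => y j + if j = midx y then 1 else 0) - W y)
      + mu * ∑ i, (if 0 < y i then (1 : ℝ) else 0) *
          (W (fun j => y j - if j = i then 1 else 0) - W y))
    (c : ℝ) (hc : 0 < c)
    (hdrift : ∀ y : Fin n → ℕ, y ≠ 0 →
      c ≤ mu - lam * (y (midx y) : ℝ) / (∑ i, (y i : ℝ))
        - a * (1 - b y) * lam * ((∑ i, p i * (y i : ℝ)) - (y (midx y) : ℝ)) / (∑ i, (y i : ℝ))) :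
    ∀ y : Fin n → ℕ, LW y ≤ -c * (∑ i, (y i : ℝ)) + (lam + n * mu) / 2 :=
  stmt7_general n lam mu a hmu p hps b midx W hW LW hLW c hdrift
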